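/- With distinct a, c ∈ X, the operation x ⊢ y := (x if x ≠ c, a if x = c) is associative, and (X, ⊢) is a strong interassociate of (X, ⊣_c^a), i.e., in addition to the two interassociativity axioms, x ⊣ (y ⊢ z) = x ⊢ (y ⊣ z) holds for all x, y, z ∈ X. -/

import Mathlib

/-! Since `a ≠ c`, no value of `⊢` equals `c`; moreover `x ⊣ w = x ⊢ w` whenever `w ≠ c`, and
both operations return their left argument when it is not `c`. Hence each of the four composites
equals `x ⊢ _`, whose value does not depend on its right argument. -/

namespace Interassociate

variable {X : Type*} [DecidableEq X] (a c : X)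

/-- `dashv a c` is `⊣_c^a`, and `vdash a c` is `⊢`. -/
def dashv (x y : X) : X := if x ≠ c then x else if y ≠ c then a else c

def vdash (x _ : X) : X := if x ≠ c then x else a

variable {a c}

theorem dashv_of_ne {x : X} (hx : x ≠ c) (y : X) : dashv a c x y = x := if_pos hx

theorem vdash_of_ne {x : X} (hx : x ≠ c) (y : X) : vdash a c x y = x := if_pos hx

theorem vdash_ne (hac : a ≠ c) (x y : X) : vdash a c x y ≠ c := by
  unfold vdash
  split_ifs with hx
  exacts [hx, hac]

theorem dashv_eq_vdash_of_ne {y : X} (hy : y ≠ c) (x z : X) : dashv a c x y = vdash a c x z := by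
  unfold dashv vdash
  split_ifs <;> rfl

theorem dashv_vdash_eq_vdash (hac : a ≠ c) (x y z : X) :
    vdash a c (dashv a c x y) z = vdash a c x z := by
  obtain rfl | hx := eq_or_ne x c
  · obtain rfl | hy := eq_or_ne y x
    · simp only [dashv, ne_eq, not_true_eq_false, if_false]
    · rw [dashv_eq_vdash_of_ne hy _ z, vdash_of_ne (vdash_ne hac _ _)]
  · rw [dashv_of_ne hx]

theorem vdash_assoc (hac : a ≠ c) (x y z : X) :
    vdash a c (vdash a c x y) z = vdash a c x (vdash a c y z) :=
  vdash_of_ne (vdash_ne hac x y) z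

theorem dashv_vdash_assoc (hac : a ≠ c) (x y z : X) :
    vdash a c (dashv a c x y) z = dashv a c x (vdash a c y z) := by
  rw [dashv_vdash_eq_vdash hac, dashv_eq_vdash_of_ne (vdash_ne hac y z)]

theorem vdash_dashv_assoc (hac : a ≠ c) (x y z : X) :
    dashv a c (vdash a c x y) z = vdash a c x (dashv a c y z) :=
  dashv_of_ne (vdash_ne hac x y) z

theorem dashv_vdash_eq_vdash_dashv (hac : a ≠ c) (x y z : X) :
    dashv a c x (vdash a c y z) = vdash a c x (dashv a c y z) :=
  dashv_eq_vdash_of_ne (vdash_ne hac y z) x _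

end Interassociate

theorem strong_interassociate_of_LOB {X : Type*} [DecidableEq X] (a c : X) (hac : a ≠ c) :
    (∀ x y z : X, (fun p _ => if p ≠ c then p else a)
        ((fun p _ => if p ≠ c then p else a) x y) z
      = (fun p _ => if p ≠ c then p else a) x
        ((fun p _ => if p ≠ c then p else a) y z)) ∧
    (∀ x y z : X, (fun p _ => if p ≠ c then p else a)
        ((fun p q => if p ≠ c then p else if q ≠ c then a else c) x y) z
      = (fun p q => if p ≠ c then p else if q ≠ c then a else c) x
        ((fun p _ => if p ≠ c then p else a) y z)) ∧
    (∀ x y z : X, (fun p q => if p ≠ c then p else if q ≠ c then a else c)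
        ((fun p _ => if p ≠ c then p else a) x y) z
      = (fun p _ => if p ≠ c then p else a) x
        ((fun p q => if p ≠ c then p else if q ≠ c then a else c) y z)) ∧
    (∀ x y z : X, (fun p q => if p ≠ c then p else if q ≠ c then a else c) x
        ((fun p _ => if p ≠ c then p else a) y z)
      = (fun p _ => if p ≠ c then p else a) x
        ((fun p q => if p ≠ c then p else if q ≠ c then a else c) y z)) :=
  ⟨Interassociate.vdash_assoc hac, Interassociate.dashv_vdash_assoc hac,
    Interassociate.vdash_dashv_assoc hac, Interassociate.dashv_vdash_eq_vdash_dashv hac⟩
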